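/- Let p ∈ (1,∞) with conjugate exponent p′ (1/p + 1/p′ = 1) and let g : ℝ³×ℝ³ → ℝᵐ be measurable. Then there is a constant C depending only on p such that ‖ ∫_{ℝ³} |g(x,ξ)| dξ ‖_{L^p_x(ℝ³)} ≤ C ‖g‖_{L^∞(ℝ⁶)}^{1/p′} ( ∬_{ℝ⁶} |g(x,ξ)| |ξ|^{3(p−1)} dx dξ )^{1/p}. In particular, for a phase-space density f with velocity gradient ∇_ξ f, ‖∇_ξ f‖_{L^p_x L¹_ξ} ≤ C ‖∇_ξ f‖_{L^∞_{x,ξ}}^{1/p′} ( ∬_{ℝ⁶} |∇_ξ f| |ξ|^{3(p−1)} dx dξ )^{1/p}. -/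

import Mathlib

/-!
Split the `ξ`-integral at `|ξ| = R`. On the ball `|g| ≤ ‖g‖_∞`, which contributes
`‖g‖_∞ |B_1| R³`; off the ball `1 ≤ (|ξ| / R)^{3(p-1)}`, which contributes
`R^{-3(p-1)} ∫ |g| |ξ|^{3(p-1)} dξ`. Balancing the two terms in `R` gives, for each `x`,
`∫ |g(x,ξ)| dξ ≤ C ‖g‖_∞^{1-1/p} (∫ |g(x,ξ)| |ξ|^{3(p-1)} dξ)^{1/p}`, whose `p`-th power is
linear in the moment, so integrating in `x` (Tonelli) gives the estimate.
-/

open MeasureTheory Real NNReal ENNReal RealInnerProductSpace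
noncomputable section

/-- Physical space `ℝ³`. -/
abbrev E3 := EuclideanSpace ℝ (Fin 3)
/-- Phase space `ℝ⁶ = ℝ³ × ℝ³`. -/
abbrev Z6 := E3 × E3

/-- `∇K` for the Coulomb kernel `K(x) = σ/|x|` (σ = ±1): `∇K(x) = -σ x/|x|³`. -/
noncomputable def gradK (σ : ℝ) (x : E3) : E3 := (-σ / ‖x‖ ^ 3) • x

/-- Spatial density `ρ_f(x) = ∫ f(x,ξ) dξ`. -/
noncomputable def rhoDen (f : E3 → E3 → ℝ) (x : E3) : ℝ := ∫ ξ : E3, f x ξ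

/-- Self-induced force field `E_f = ∇K ∗ ρ_f`. -/
noncomputable def force (σ : ℝ) (f : E3 → E3 → ℝ) (x : E3) : E3 :=
  ∫ y : E3, rhoDen f y • gradK σ (x - y)

/-- Gradient in the position variable. -/
noncomputable def gradX (f : E3 → E3 → ℝ) (x ξ : E3) : E3 := gradient (fun x' => f x' ξ) x

/-- Gradient in the velocity variable `∇_ξ f`. -/
noncomputable def gradV (f : E3 → E3 → ℝ) (x ξ : E3) : E3 := gradient (fun ξ' => f x ξ') ξ

/-- `f` is a nonnegative solution of the Vlasov–Poisson equation
`∂_t f + ξ·∇_x f + E_f·∇_ξ f = 0` for times in the set `S`. -/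
noncomputable def IsVPSolutionOn (σ : ℝ) (S : Set ℝ) (f : ℝ → E3 → E3 → ℝ) : Prop :=
  (∀ t ∈ S, ∀ x ξ : E3, 0 ≤ f t x ξ) ∧
  ∀ t ∈ S, ∀ x ξ : E3,
    deriv (fun s => f s x ξ) t + ⟪ξ, gradX (f t) x ξ⟫ +
      ⟪force σ (f t) x, gradV (f t) x ξ⟫ = 0

/-- The Lorentz `L^{3,1}(ℝ³)` (quasi-)norm of a real valued function,
`∫₀^∞ |{|g| > s}|^{1/3} ds`. -/
noncomputable def lorentz31 (g : E3 → ℝ) : ℝ≥0∞ :=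
  ∫⁻ s in Set.Ioi (0:ℝ), (volume {x : E3 | s < |g x|}) ^ ((1:ℝ)/3)

/-- The weak `L^{3/2,∞}(ℝ³)` (quasi-)norm of a vector field,
`sup_{s>0} s |{|g| > s}|^{2/3}`. -/
noncomputable def weakL32 (g : E3 → E3) : ℝ≥0∞ :=
  ⨆ s : ℝ≥0, (s : ℝ≥0∞) * (volume {x : E3 | (s : ℝ) < ‖g x‖}) ^ ((2:ℝ)/3)

/-- The function `x ↦ ∫ |∇_ξ f(x,ξ)| dξ`. -/
noncomputable def xiMargGradNorm (f : E3 → E3 → ℝ) (x : E3) : ℝ := ∫ ξ : E3, ‖gradV f x ξ‖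

/-- `λ_f = ‖∇_ξ f‖_{L^{3,1}_x L¹_ξ}`. -/
noncomputable def lambdaL1 (f : E3 → E3 → ℝ) : ℝ≥0∞ := lorentz31 (xiMargGradNorm f)

/-- `L¹(ℝ⁶)` distance of two phase-space functions. -/
noncomputable def L1diff (f g : E3 → E3 → ℝ) : ℝ≥0∞ := ∫⁻ z : Z6, ‖f z.1 z.2 - g z.1 z.2‖₊

/-- Pointwise square root of a phase-space density. -/
noncomputable def sqrtF (f : E3 → E3 → ℝ) (x ξ : E3) : ℝ := Real.sqrt (f x ξ)

/-- `‖∇_ξ g‖_{L³_x L²_ξ}`. -/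
noncomputable def L3L2grad (g : E3 → E3 → ℝ) : ℝ≥0∞ :=
  (∫⁻ x : E3, (∫⁻ ξ : E3, ((‖gradV g x ξ‖₊ : ℝ≥0∞)) ^ (2:ℝ)) ^ ((3:ℝ)/2)) ^ ((1:ℝ)/3)

/-- `λ_f` for the L² weak-strong estimate:
`‖ρ_f‖_{L^∞}^{1/2} ‖∇_ξ √f‖_{L³_x L²_ξ} + C_∞^{1/2} ‖∇_ξ √f‖_{L^{3,1}_x L¹_ξ}`. -/
noncomputable def lambdaL2 (Cinf : ℝ) (f : E3 → E3 → ℝ) : ℝ≥0∞ :=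
  (eLpNorm (rhoDen f) ⊤ volume) ^ ((1:ℝ)/2) * L3L2grad (sqrtF f)
    + ENNReal.ofReal (Real.sqrt Cinf) * lorentz31 (xiMargGradNorm (sqrtF f))

open Metric

namespace ENNReal

/-- `hA` and `hM` are needed because the right-hand side vanishes when `A = 0, M = ⊤` or
`A = ⊤, M = 0` (as `0 * ⊤ = 0`), while the bound `hbound` is then vacuous. -/
theorem le_mul_rpow_mul_rpow_of_forall_le_add {d q : ℝ} (hd : 0 < d) (hq : 0 < q)
    {κ A M h : ℝ≥0∞} (hA : A = 0 → h = 0) (hM : M = 0 → h = 0)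
    (hbound : ∀ ρ : ℝ≥0∞, ρ ≠ 0 → ρ ≠ ⊤ → h ≤ κ * A * ρ ^ d + ρ ^ (-q) * M) :
    h ≤ (κ + 1) * A ^ (q / (d + q)) * M ^ (d / (d + q)) := by
  have hdq : 0 < d + q := by positivity
  rcases eq_or_ne A 0 with rfl | hA0
  · simp [hA rfl]
  rcases eq_or_ne M 0 with rfl | hM0
  · simp [hM rfl]
  rcases eq_or_ne A ⊤ with rfl | hAt
  · simp [top_rpow_of_pos (div_pos hq hdq), hM0, (div_pos hd hdq).le]
  rcases eq_or_ne M ⊤ with rfl | hMt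
  · simp [top_rpow_of_pos (div_pos hd hdq), hA0, hAt]
  have mul_rpow_self : ∀ {X : ℝ≥0∞}, X ≠ 0 → X ≠ ⊤ → ∀ e : ℝ, X * X ^ e = X ^ (1 + e) :=
    fun hX hXt e => by rw [rpow_add _ _ hX hXt, rpow_one]
  -- the two terms balance at `ρ = (M / A) ^ (1 / (d + q))`
  set a := 1 / (d + q)
  have hρ : ∀ e : ℝ, (M ^ a * A ^ (-a)) ^ e = M ^ (a * e) * A ^ (-a * e) := fun e => by
    rw [mul_rpow_of_ne_top (rpow_ne_top_of_ne_zero hM0 hMt) (rpow_ne_top_of_ne_zero hA0 hAt),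
      rpow_mul, rpow_mul]
  have had : a * d = d / (d + q) := by ring
  have haq : a * q = q / (d + q) := by ring
  have hA_exp : 1 + -a * d = q / (d + q) := by rw [neg_mul, had]; field_simp; ring
  have hM_exp : 1 + a * -q = d / (d + q) := by rw [mul_neg, haq]; field_simp; ring
  refine (hbound (M ^ a * A ^ (-a)) ?_ ?_).trans_eq ?_
  · exact mul_ne_zero (rpow_pos (pos_iff_ne_zero.2 hM0) hMt).ne'
      (rpow_pos (pos_iff_ne_zero.2 hA0) hAt).ne'
  · exact mul_ne_top (rpow_ne_top_of_ne_zero hM0 hMt) (rpow_ne_top_of_ne_zero hA0 hAt)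
  · calc κ * A * (M ^ a * A ^ (-a)) ^ d + (M ^ a * A ^ (-a)) ^ (-q) * M
          = κ * (A * A ^ (-a * d)) * M ^ (a * d) + A ^ (-a * -q) * (M * M ^ (a * -q)) := by
            rw [hρ, hρ]; ring
        _ = (κ + 1) * A ^ (q / (d + q)) * M ^ (d / (d + q)) := by
            rw [mul_rpow_self hA0 hAt, mul_rpow_self hM0 hMt, hA_exp, hM_exp,
              neg_mul_neg, had, haq]
            ring

end ENNReal

theorem lintegral_le_mul_measure_ball_add_moment {E : Type*} [NormedAddCommGroup E]
    [MeasurableSpace E] [OpensMeasurableSpace E] {μ : Measure E} {f : E → ℝ≥0∞} {A : ℝ≥0∞}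
    (hf : ∀ᵐ ξ ∂μ, f ξ ≤ A) {q : ℝ} (hq : 0 ≤ q) {r : ℝ≥0} (hr : r ≠ 0) :
    ∫⁻ ξ, f ξ ∂μ ≤ A * μ (ball 0 r) + (r : ℝ≥0∞) ^ (-q) * ∫⁻ ξ, f ξ * ‖ξ‖ₑ ^ q ∂μ := by
  have h_far : ∀ ξ ∉ ball (0 : E) r, f ξ ≤ (r : ℝ≥0∞) ^ (-q) * (f ξ * ‖ξ‖ₑ ^ q) := by
    intro ξ hξ
    have hrξ : (r : ℝ≥0∞) ≤ ‖ξ‖ₑ := by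
      rw [mem_ball_zero_iff, not_lt] at hξ
      exact ENNReal.coe_le_coe.2 (NNReal.coe_le_coe.1 hξ)
    calc f ξ = (r : ℝ≥0∞) ^ (-q) * ((r : ℝ≥0∞) ^ q * f ξ) := by
          rw [← mul_assoc, ← ENNReal.rpow_add _ _ (ENNReal.coe_ne_zero.2 hr) ENNReal.coe_ne_top,
            neg_add_cancel, ENNReal.rpow_zero, one_mul]
      _ ≤ (r : ℝ≥0∞) ^ (-q) * (f ξ * ‖ξ‖ₑ ^ q) := by
          rw [mul_comm ((r : ℝ≥0∞) ^ q)]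
          gcongr
  have h_split : ∀ᵐ ξ ∂μ, f ξ ≤
      (ball (0 : E) r).indicator (fun _ => A) ξ + (r : ℝ≥0∞) ^ (-q) * (f ξ * ‖ξ‖ₑ ^ q) := by
    filter_upwards [hf] with ξ hξA
    by_cases hξ : ξ ∈ ball (0 : E) r
    · rw [Set.indicator_of_mem hξ]
      exact le_add_right hξA
    · exact le_add_left (h_far ξ hξ)
  calc ∫⁻ ξ, f ξ ∂μ
      ≤ ∫⁻ ξ, (ball (0 : E) r).indicator (fun _ => A) ξ
          + (r : ℝ≥0∞) ^ (-q) * (f ξ * ‖ξ‖ₑ ^ q) ∂μ := lintegral_mono_ae h_split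
    _ = A * μ (ball 0 r) + (r : ℝ≥0∞) ^ (-q) * ∫⁻ ξ, f ξ * ‖ξ‖ₑ ^ q ∂μ := by
        rw [lintegral_add_left (measurable_const.indicator measurableSet_ball),
          lintegral_indicator_const measurableSet_ball,
          lintegral_const_mul' _ _ (ENNReal.rpow_ne_top_of_ne_zero (ENNReal.coe_ne_zero.2 hr)
            ENNReal.coe_ne_top)]

theorem lintegral_le_rpow_mul_moment_rpow {E : Type*} [NormedAddCommGroup E] [NormedSpace ℝ E]
    [FiniteDimensional ℝ E] [Nontrivial E] [MeasurableSpace E] [BorelSpace E]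
    (μ : Measure E) [μ.IsAddHaarMeasure] {f : E → ℝ≥0∞} (hf_meas : AEMeasurable f μ)
    {A : ℝ≥0∞} (hf : ∀ᵐ ξ ∂μ, f ξ ≤ A) {q : ℝ} (hq : 0 < q) :
    ∫⁻ ξ, f ξ ∂μ ≤ (μ (ball 0 1) + 1) * A ^ (q / (Module.finrank ℝ E + q)) *
      (∫⁻ ξ, f ξ * ‖ξ‖ₑ ^ q ∂μ) ^ ((Module.finrank ℝ E : ℝ) / (Module.finrank ℝ E + q)) := by
  refine ENNReal.le_mul_rpow_mul_rpow_of_forall_le_add (Nat.cast_pos.2 Module.finrank_pos) hq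
    (fun hA => ?_) (fun hM => ?_) (fun ρ hρ hρt => ?_)
  · exact nonpos_iff_eq_zero.1 ((lintegral_mono_ae hf).trans_eq (by simp [hA]))
  · have h_moment := (lintegral_eq_zero_iff' (hf_meas.mul (by fun_prop))).1 hM
    refine (lintegral_eq_zero_iff' hf_meas).2 ?_
    filter_upwards [h_moment, Measure.ae_ne μ 0] with ξ hξ hξ0
    simpa [ENNReal.rpow_eq_zero_iff_of_pos hq, hξ0] using hξ
  · lift ρ to ℝ≥0 using hρt
    refine (lintegral_le_mul_measure_ball_add_moment hf hq.le
      (ENNReal.coe_ne_zero.1 hρ)).trans_eq ?_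
    rw [Measure.addHaar_ball μ 0 ρ.coe_nonneg, ENNReal.ofReal_pow ρ.coe_nonneg,
      ENNReal.ofReal_coe_nnreal, ← ENNReal.rpow_natCast]
    ring

theorem lintegral_rpow_lintegral_rpow_le {X E : Type*} [MeasurableSpace X] (ν : Measure X)
    [NormedAddCommGroup E] [NormedSpace ℝ E] [FiniteDimensional ℝ E] [Nontrivial E]
    [MeasurableSpace E] [BorelSpace E] (μ : Measure E) [μ.IsAddHaarMeasure]
    {G : X × E → ℝ≥0∞} (hG : Measurable G) {p : ℝ} (hp : 1 < p) :
    (∫⁻ x, (∫⁻ ξ, G (x, ξ) ∂μ) ^ p ∂ν) ^ (1 / p) ≤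
      (μ (ball 0 1) + 1) * essSup G (ν.prod μ) ^ (1 - 1 / p) *
        (∫⁻ z, G z * ‖z.2‖ₑ ^ (Module.finrank ℝ E * (p - 1)) ∂ν.prod μ) ^ (1 / p) := by
  set d : ℝ := ↑(Module.finrank ℝ E) with hd_def
  set q := d * (p - 1)
  set c := (μ (ball 0 1) + 1) * essSup G (ν.prod μ) ^ (1 - 1 / p)
  have hp0 : 0 < p := one_pos.trans hp
  have hd : 0 < d := Nat.cast_pos.2 Module.finrank_pos
  have hq : 0 < q := mul_pos hd (sub_pos.2 hp)
  have hdq : d + q = d * p := by ring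
  have hA_exp : q / (d + q) = 1 - 1 / p := by rw [hdq]; field_simp; ring
  have hM_exp : d / (d + q) = 1 / p := by rw [hdq]; field_simp
  have h_slice : ∀ᵐ x ∂ν,
      ∫⁻ ξ, G (x, ξ) ∂μ ≤ c * (∫⁻ ξ, G (x, ξ) * ‖ξ‖ₑ ^ q ∂μ) ^ (1 / p) := by
    filter_upwards [Measure.ae_ae_of_ae_prod (ENNReal.ae_le_essSup (μ := ν.prod μ) G)] with x hx
    have h := lintegral_le_rpow_mul_moment_rpow μ (f := fun ξ => G (x, ξ))
      (hG.comp measurable_prodMk_left).aemeasurable hx hq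
    rwa [← hd_def, hA_exp, hM_exp] at h
  have h_moment : Measurable fun z : X × E => G z * ‖z.2‖ₑ ^ q := by fun_prop
  calc (∫⁻ x, (∫⁻ ξ, G (x, ξ) ∂μ) ^ p ∂ν) ^ (1 / p)
      ≤ (∫⁻ x, c ^ p * ∫⁻ ξ, G (x, ξ) * ‖ξ‖ₑ ^ q ∂μ ∂ν) ^ (1 / p) := by
        refine ENNReal.rpow_le_rpow (lintegral_mono_ae ?_) (by positivity)
        filter_upwards [h_slice] with x hx
        calc (∫⁻ ξ, G (x, ξ) ∂μ) ^ p
            ≤ (c * (∫⁻ ξ, G (x, ξ) * ‖ξ‖ₑ ^ q ∂μ) ^ (1 / p)) ^ p :=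
              ENNReal.rpow_le_rpow hx hp0.le
          _ = c ^ p * ∫⁻ ξ, G (x, ξ) * ‖ξ‖ₑ ^ q ∂μ := by
              rw [ENNReal.mul_rpow_of_nonneg _ _ hp0.le, ← ENNReal.rpow_mul,
                one_div_mul_cancel hp0.ne', ENNReal.rpow_one]
    _ = (c ^ p * ∫⁻ z, G z * ‖z.2‖ₑ ^ q ∂ν.prod μ) ^ (1 / p) := by
        rw [lintegral_const_mul _ h_moment.lintegral_prod_right',
          lintegral_prod _ h_moment.aemeasurable]
    _ = c * (∫⁻ z, G z * ‖z.2‖ₑ ^ q ∂ν.prod μ) ^ (1 / p) := by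
        rw [ENNReal.mul_rpow_of_nonneg _ _ (by positivity), ← ENNReal.rpow_mul,
          mul_one_div_cancel hp0.ne', ENNReal.rpow_one]

/-- **Interpolation inequality:** for `1 < p < ∞` there is `C = C(p)` with
`‖∫ |g(x,ξ)| dξ‖_{L^p_x} ≤ C ‖g‖_{L^∞}^{1/p'} (∬ |g| |ξ|^{3(p-1)})^{1/p}`; in particular
for `g = ∇_ξ f`. -/
theorem Lp_interpolation_moment (p : ℝ) (hp : 1 < p) :
    ∃ C : ℝ≥0∞, 0 < C ∧ C ≠ ⊤ ∧
      (∀ (m : ℕ) (g : E3 → E3 → EuclideanSpace ℝ (Fin m)),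
        Measurable (fun z : Z6 => g z.1 z.2) →
        (∫⁻ x : E3, (∫⁻ ξ : E3, ‖g x ξ‖₊) ^ p) ^ (1/p) ≤
          C * (essSup (fun z : Z6 => (‖g z.1 z.2‖₊ : ℝ≥0∞)) volume) ^ (1 - 1/p) *
            (∫⁻ z : Z6, (‖g z.1 z.2‖₊ : ℝ≥0∞) * (‖z.2‖₊ : ℝ≥0∞) ^ (3 * (p - 1))) ^ (1/p)) ∧
      (∀ f : E3 → E3 → ℝ,
        Measurable (fun z : Z6 => gradV f z.1 z.2) →
        (∫⁻ x : E3, (∫⁻ ξ : E3, ‖gradV f x ξ‖₊) ^ p) ^ (1/p) ≤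
          C * (essSup (fun z : Z6 => (‖gradV f z.1 z.2‖₊ : ℝ≥0∞)) volume) ^ (1 - 1/p) *
            (∫⁻ z : Z6, (‖gradV f z.1 z.2‖₊ : ℝ≥0∞) * (‖z.2‖₊ : ℝ≥0∞) ^ (3 * (p - 1))) ^ (1/p)) := by
  refine ⟨volume (ball (0 : E3) 1) + 1, by positivity, by finiteness,
    fun m g hg => ?_, fun f hg => ?_⟩ <;>
  · have h := lintegral_rpow_lintegral_rpow_le volume volume hg.enorm hp
    rwa [finrank_euclideanSpace_fin, Nat.cast_ofNat, ← Measure.volume_eq_prod] at h
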